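/- For any degree-0 element α of a filtered shifted L∞-algebra L, the Bianchi identity holds: ∂(curv(α)) + Σ_{m=1}^∞ (1/m!) {α,...,α, curv(α)} = 0, where α appears m times in the m-th bracket. -/

import Mathlib

open scoped BigOperators

/-! # Core framework: filtered shifted `L∞`-algebras (`SLie∞`-algebras)

A filtered shifted `L∞`-algebra is modelled as a `ℤ`-graded `k`-module `L` with
degree-`1` graded-symmetric multibrackets (the differential absorbed as the unary
bracket), a complete descending filtration compatible with the brackets, and the
shifted `L∞` (Jacobi) relations expressed with Koszul signs and shuffles. -/

/-- The Koszul sign of a permutation `σ` acting on homogeneous elements of degrees `d`. -/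
def koszulSign (k : Type) [Field k] {m : ℕ} (σ : Equiv.Perm (Fin m)) (d : Fin m → ℤ) : k :=
  ∏ p ∈ Finset.univ.filter (fun p : Fin m × Fin m => p.1 < p.2 ∧ σ p.2 < σ p.1),
    (-1 : k) ^ ((d p.1) * (d p.2)).natAbs

/-- The set of `(p, m-p)`-shuffles in the symmetric group on `m` letters. -/
def shuffles (p m : ℕ) : Finset (Equiv.Perm (Fin m)) :=
  Finset.univ.filter fun σ =>
    (∀ i j : Fin m, i < j → (j : ℕ) < p → σ i < σ j) ∧
    (∀ i j : Fin m, i < j → p ≤ (i : ℕ) → σ i < σ j)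

section Front
variable {L : Type}

/-- First `p` arguments `v (σ 1), …, v (σ p)`. -/
def frontV {m p : ℕ} (hpm : p ≤ m) (v : Fin m → L) (σ : Equiv.Perm (Fin m)) : Fin p → L :=
  fun i => v (σ ⟨i, lt_of_lt_of_le i.2 hpm⟩)

/-- Remaining arguments `v (σ (p+1)), …, v (σ m)`. -/
def backV {m p : ℕ} (hpm : p ≤ m) (v : Fin m → L) (σ : Equiv.Perm (Fin m)) :
    Fin (m - p) → L :=
  fun j => v (σ ⟨p + j, by have := j.2; omega⟩)

end Front

/-- Convergence of the series `∑ f i` to `s` in the topology defined by a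
descending filtration `F` by submodules. -/
def HasFSumF (k : Type) [Field k] {L : Type} [AddCommGroup L] [Module k L]
    (F : ℕ → Submodule k L) (f : ℕ → L) (s : L) : Prop :=
  ∀ n : ℕ, ∃ N : ℕ, ∀ M : ℕ, N ≤ M → s - ∑ i ∈ Finset.range M, f i ∈ F n

/-- The (choice of a) limit of a series in the filtration topology; junk value `0`
if the series does not converge. -/
noncomputable def limF (k : Type) [Field k] {L : Type} [AddCommGroup L] [Module k L]
    (F : ℕ → Submodule k L) (f : ℕ → L) : L :=
  letI := Classical.propDecidable (∃ s, HasFSumF k F f s)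
  if h : ∃ s, HasFSumF k F f s then h.choose else 0

/-- The term `ε(σ; v) ⬝ out ( inn (v_{σ(1)}, …, v_{σ(p)}), v_{σ(p+1)}, …, v_{σ(m)} )`
appearing in the shifted `L∞` relations and in the compatibility equations for
`∞`-morphisms. -/
def shTerm (k : Type) [Field k] {L L' : Type} [AddCommGroup L] [Module k L]
    [AddCommGroup L'] [Module k L']
    (inn : ∀ m : ℕ, MultilinearMap k (fun _ : Fin m => L) L)
    (out : ∀ m : ℕ, MultilinearMap k (fun _ : Fin m => L) L')
    {m : ℕ} (v : Fin m → L) (d : Fin m → ℤ) (p : ℕ) (hpm : p ≤ m)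
    (σ : Equiv.Perm (Fin m)) : L' :=
  koszulSign k σ d • out (m - p + 1) (Fin.cons (inn p (frontV hpm v σ)) (backV hpm v σ))

/-- A filtered shifted `L∞`-algebra (`SLie∞`-algebra): a `ℤ`-graded module with
degree-`1` graded-symmetric brackets (the differential is the unary bracket),
satisfying the shifted `L∞` relations, together with a complete descending
filtration `L = filt 1 ⊇ filt 2 ⊇ ⋯` compatible with the brackets. -/
structure FSLie (k : Type) [Field k] [CharZero k] (L : Type) [AddCommGroup L]
    [Module k L] where
  /-- the grading (cochain degrees) -/
  gr : ℤ → Submodule k L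
  internal : DirectSum.IsInternal gr
  /-- the multibrackets; `br 1` is the differential `∂` -/
  br : ∀ m : ℕ, MultilinearMap k (fun _ : Fin m => L) L
  br_zero : br 0 = 0
  br_degree : ∀ (m : ℕ) (v : Fin m → L) (d : Fin m → ℤ),
      (∀ i, v i ∈ gr (d i)) → br m v ∈ gr ((∑ i, d i) + 1)
  br_symm : ∀ (m : ℕ) (σ : Equiv.Perm (Fin m)) (v : Fin m → L) (d : Fin m → ℤ),
      (∀ i, v i ∈ gr (d i)) → br m (v ∘ σ) = koszulSign k σ d • br m v
  /-- the complete descending filtration -/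
  filt : ℕ → Submodule k L
  filt_zero : filt 0 = ⊤
  filt_one : filt 1 = ⊤
  filt_antitone : ∀ {i j : ℕ}, i ≤ j → filt j ≤ filt i
  filt_br : ∀ (m : ℕ) (v : Fin m → L) (w : Fin m → ℕ), 2 ≤ m →
      (∀ i, v i ∈ filt (w i)) → br m v ∈ filt (∑ i, w i)
  filt_diff : ∀ (n : ℕ) (x : L), x ∈ filt n → br 1 ![x] ∈ filt n
  hausdorff : ∀ x : L, (∀ n, x ∈ filt n) → x = 0
  complete : ∀ a : ℕ → L, (∀ n, a (n + 1) - a n ∈ filt (n + 1)) →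
      ∃ s, ∀ n, s - a n ∈ filt (n + 1)
  gr_closed : ∀ (d : ℤ) (f : ℕ → L) (s : L), (∀ n, f n ∈ gr d) →
      HasFSumF k filt f s → s ∈ gr d
  /-- the shifted `L∞` relations (with the differential absorbed as `br 1`) -/
  jacobi : ∀ (m : ℕ) (v : Fin m → L) (d : Fin m → ℤ), (∀ i, v i ∈ gr (d i)) →
      (∑ p ∈ (Finset.Icc 1 m).attach, ∑ σ ∈ shuffles p.1 m,
        shTerm k br br v d p.1 (Finset.mem_Icc.mp p.2).2 σ) = 0

section Defs
variable (k : Type) [Field k] [CharZero k] {L L' : Type} [AddCommGroup L] [Module k L]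
  [AddCommGroup L'] [Module k L']

/-- The terms of the curvature series `curv(α) = ∂α + ∑_{m ≥ 2} (1/m!) {α,…,α}`
(here `∂α = {α}` is the `m = 1` term). -/
def curvSeries (A : FSLie k L) (α : L) : ℕ → L :=
  fun m => if m = 0 then 0 else ((m.factorial : k)⁻¹) • A.br m (fun _ => α)

/-- A Maurer–Cartan element: a degree-`0` element with vanishing curvature. -/
def IsMC (A : FSLie k L) (α : L) : Prop :=
  α ∈ A.gr 0 ∧ HasFSumF k A.filt (curvSeries k A α) 0

/-- The terms of the series defining the twisted differential
`∂^α(x) = ∂x + ∑_{j ≥ 1} (1/j!) {α,…,α,x}`. -/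
def twDiffSeries (A : FSLie k L) (α x : L) : ℕ → L :=
  fun j => ((j.factorial : k)⁻¹) • A.br (j + 1) (Fin.snoc (fun _ : Fin j => α) x)

/-- The terms of the series defining the twisted brackets
`{v₁,…,v_m}^α = ∑_{j ≥ 0} (1/j!) {α,…,α,v₁,…,v_m}`. -/
def twBrSeries (A : FSLie k L) (α : L) {m : ℕ} (v : Fin m → L) : ℕ → L :=
  fun j => ((j.factorial : k)⁻¹) • A.br (j + m) (Fin.append (fun _ : Fin j => α) v)

/-- `A'` is the twist of `A` by `α`: same grading and filtration, and the brackets of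
`A'` are the sums of the twisted-bracket series of `A` at `α`. -/
def IsTwist (A A' : FSLie k L) (α : L) : Prop :=
  A'.gr = A.gr ∧ A'.filt = A.filt ∧
  ∀ (m : ℕ), 1 ≤ m → ∀ v : Fin m → L,
    HasFSumF k A.filt (twBrSeries k A α v) (A'.br m v)

end Defs

/-! ### Compositions, block shuffles, and `∞`-morphisms -/

/-- Compositions of `m` into `t` (ordered) positive parts. -/
def compositions (t m : ℕ) : Finset (Fin t → ℕ) :=
  (Fintype.piFinset fun _ : Fin t => Finset.range (m + 1)).filter
    fun c => (∀ i, 1 ≤ c i) ∧ (∑ i, c i) = m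

/-- The starting index of the `a`-th block of a composition `c`. -/
def offsetC {t : ℕ} (c : Fin t → ℕ) (a : Fin t) : ℕ :=
  ∑ i ∈ Finset.univ.filter (fun i => i < a), c i

theorem offsetC_add_lt {t m : ℕ} {c : Fin t → ℕ} (hc : c ∈ compositions t m)
    (a : Fin t) {j : ℕ} (hj : j < c a) : offsetC c a + j < m := by
  obtain ⟨-, -, hsum⟩ : c ∈ Fintype.piFinset (fun _ : Fin t => Finset.range (m+1)) ∧
      (∀ i, 1 ≤ c i) ∧ (∑ i, c i) = m := by
    simpa [compositions, and_assoc] using hc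
  have hna : a ∉ Finset.univ.filter (fun i => i < a) := by simp
  have h2 : (∑ i ∈ insert a (Finset.univ.filter (fun i => i < a)), c i) ≤ ∑ i, c i :=
    Finset.sum_le_sum_of_subset (Finset.subset_univ _)
  rw [Finset.sum_insert hna] at h2
  have h1 : offsetC c a + c a ≤ ∑ i, c i := by unfold offsetC; omega
  omega

/-- The `SH`-shuffles associated to a composition `c` of `m`: permutations that are
increasing within each block and whose values at the first elements of the blocks
are increasing. -/
def blockShuffles {t : ℕ} (c : Fin t → ℕ) (m : ℕ) : Finset (Equiv.Perm (Fin m)) :=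
  Finset.univ.filter fun σ =>
    (∀ a : Fin t, ∀ i j : Fin m, i < j → offsetC c a ≤ (i : ℕ) →
        (j : ℕ) < offsetC c a + c a → σ i < σ j) ∧
    (∀ a b : Fin t, a < b → ∀ i j : Fin m, (i : ℕ) = offsetC c a →
        (j : ℕ) = offsetC c b → σ i < σ j)

/-- The index `τ(offset(a) + j)` of the `j`-th element of the `a`-th block. -/
def blockIdx {t m : ℕ} {c : Fin t → ℕ} (hc : c ∈ compositions t m)
    (τ : Equiv.Perm (Fin m)) (a : Fin t) (j : Fin (c a)) : Fin m :=
  τ ⟨offsetC c a + j, offsetC_add_lt hc a j.2⟩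

section Mor
variable (k : Type) [Field k] [CharZero k] {L L' : Type} [AddCommGroup L] [Module k L]
  [AddCommGroup L'] [Module k L']

/-- Taylor components of a (continuous, degree-`0`, graded-symmetric) candidate
`∞`-morphism between filtered shifted `L∞`-algebras, without the compatibility
with the codifferentials. -/
structure MorData (A : FSLie k L) (B : FSLie k L') where
  T : ∀ m : ℕ, MultilinearMap k (fun _ : Fin m => L) L'
  T_zero : T 0 = 0
  T_degree : ∀ (m : ℕ) (v : Fin m → L) (d : Fin m → ℤ),
      (∀ i, v i ∈ A.gr (d i)) → T m v ∈ B.gr (∑ i, d i)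
  T_symm : ∀ (m : ℕ) (σ : Equiv.Perm (Fin m)) (v : Fin m → L) (d : Fin m → ℤ),
      (∀ i, v i ∈ A.gr (d i)) → T m (v ∘ σ) = koszulSign k σ d • T m v
  T_filt : ∀ (m : ℕ) (v : Fin m → L) (w : Fin m → ℕ),
      (∀ i, v i ∈ A.filt (w i)) → T m v ∈ B.filt (∑ i, w i)

/-- Left-hand side (the `F ∘ Q` side) of the compatibility equation of an
`∞`-morphism with the codifferentials, evaluated on `v₁ ⋯ v_m`. -/
def compLHS (A : FSLie k L) (T : ∀ m : ℕ, MultilinearMap k (fun _ : Fin m => L) L')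
    {m : ℕ} (v : Fin m → L) (d : Fin m → ℤ) : L' :=
  ∑ p ∈ (Finset.Icc 1 m).attach, ∑ σ ∈ shuffles p.1 m,
    shTerm k A.br T v d p.1 (Finset.mem_Icc.mp p.2).2 σ

/-- Right-hand side (the `Q̃ ∘ F` side) of the compatibility equation, a sum over
partitions of `{1,…,m}` encoded by compositions and `SH`-shuffles. -/
def compRHS (B : FSLie k L') (T : ∀ m : ℕ, MultilinearMap k (fun _ : Fin m => L) L')
    {m : ℕ} (v : Fin m → L) (d : Fin m → ℤ) : L' :=
  ∑ t ∈ (Finset.Icc 1 m).attach, ∑ c ∈ (compositions t.1 m).attach,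
    ∑ τ ∈ blockShuffles c.1 m,
      koszulSign k τ d •
        B.br t.1 (fun a => T (c.1 a) (fun j => v (blockIdx c.2 τ a j)))

/-- The compatibility equation of an `∞`-morphism with the codifferentials, on
homogeneous inputs `v` of degrees `d`. -/
def CompatEq (A : FSLie k L) (B : FSLie k L')
    (T : ∀ m : ℕ, MultilinearMap k (fun _ : Fin m => L) L')
    {m : ℕ} (v : Fin m → L) (d : Fin m → ℤ) : Prop :=
  compLHS k A T v d = compRHS k B T v d

/-- A (continuous) `∞`-morphism of filtered shifted `L∞`-algebras. -/
structure InfMor (A : FSLie k L) (B : FSLie k L') extends MorData k A B where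
  compat : ∀ (m : ℕ) (v : Fin m → L) (d : Fin m → ℤ),
      (∀ i, v i ∈ A.gr (d i)) → CompatEq k A B T v d

/-- The series whose sum is the pushforward `F_*(α) = ∑_{j ≥ 1} (1/j!) F'(α^j)`. -/
def pushSeries (T : ∀ m : ℕ, MultilinearMap k (fun _ : Fin m => L) L') (α : L) : ℕ → L' :=
  fun j => if j = 0 then 0 else ((j.factorial : k)⁻¹) • T j (fun _ => α)

end Mor

/-! ### Degree-indexed Taylor families, twisting and composition of enhanced morphisms -/

/-- A degree-indexed family of Taylor coefficients: the value on `v₁ ⋯ v_m` where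
`vᵢ` is (declared) homogeneous of degree `dᵢ`. -/
def Fam (k : Type) [Field k] (L L' : Type) : Type :=
  ∀ m : ℕ, (Fin m → L) → (Fin m → ℤ) → L'

section Fam
variable (k : Type) [Field k] [CharZero k] {L₁ L₂ L₃ : Type}
  [AddCommGroup L₁] [Module k L₁] [AddCommGroup L₂] [Module k L₂]
  [AddCommGroup L₃] [Module k L₃]

/-- The degree-indexed family underlying Taylor components `T`. -/
def famOf (T : ∀ m : ℕ, MultilinearMap k (fun _ : Fin m => L₁) L₂) : Fam k L₁ L₂ :=
  fun m v _ => T m v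

/-- Pushforward of a degree-`0` element along a Taylor family:
`F_*(α) = ∑_{j ≥ 1} (1/j!) F'(α^j)` (a limit in the filtration topology). -/
noncomputable def pushElD (B : FSLie k L₂) (T : Fam k L₁ L₂) (α : L₁) : L₂ :=
  limF k B.filt (fun j => if j = 0 then 0 else ((j.factorial : k)⁻¹) • T j (fun _ => α) (fun _ => 0))

/-- Twist of a Taylor family by a degree-`0` element `α` of the source:
`(F^α)'(v₁ ⋯ v_m) = ∑_{j ≥ 0} (1/j!) F'(α^j v₁ ⋯ v_m)`. -/
noncomputable def twistFamD (B : FSLie k L₂) (T : Fam k L₁ L₂) (α : L₁) : Fam k L₁ L₂ :=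
  fun m v d => limF k B.filt
    (fun j => ((j.factorial : k)⁻¹) •
      T (j + m) (Fin.append (fun _ : Fin j => α) v) (Fin.append (fun _ : Fin j => (0 : ℤ)) d))

/-- Composition of Taylor families: `(G ∘ F)'(v₁ ⋯ v_m) = ∑ ± G'(F'(b₁), …, F'(b_t))`
over partitions of `{1,…,m}` into blocks `b₁, …, b_t`. -/
def compFam (S : Fam k L₂ L₃) (T : Fam k L₁ L₂) : Fam k L₁ L₃ :=
  fun m v d =>
    ∑ t ∈ (Finset.Icc 1 m).attach, ∑ c ∈ (compositions t.1 m).attach,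
      ∑ τ ∈ blockShuffles c.1 m,
        koszulSign k τ d •
          S t.1 (fun a => T (c.1 a) (fun j => v (blockIdx c.2 τ a j))
              (fun j => d (blockIdx c.2 τ a j)))
            (fun a => ∑ j, d (blockIdx c.2 τ a j))

/-- Composition of enhanced morphisms, at the level of the underlying data
`(MC element, Taylor family)`:
`(α₃, G) ∘ (α₂, F) = (α₃ + G_*(α₂), G^{α₂} ∘ F)`. -/
noncomputable def enhComp (C : FSLie k L₃) (g : L₃ × Fam k L₂ L₃) (f : L₂ × Fam k L₁ L₂) :
    L₃ × Fam k L₁ L₃ :=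
  (g.1 + pushElD k C g.2 f.1, compFam k (twistFamD k C g.2 f.1) f.2)

end Fam


/-! ### Auxiliary material for the Bianchi identity -/

section ShuffleCount

theorem card_filter_lt' (p m : ℕ) (hpm : p ≤ m) :
    (Finset.univ.filter fun i : Fin m => (i : ℕ) < p).card = p := by
  have : (Finset.univ.filter fun i : Fin m => (i : ℕ) < p)
      = Finset.image (Fin.castLE hpm) Finset.univ := by
    ext i
    simp only [Finset.mem_filter, Finset.mem_univ, true_and, Finset.mem_image]
    constructor
    · intro h; exact ⟨⟨i, h⟩, by ext; simp⟩
    · rintro ⟨j, -, rfl⟩; exact j.2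
  rw [this, Finset.card_image_of_injective _ (Fin.castLE_injective hpm), Finset.card_univ,
    Fintype.card_fin]

noncomputable def shufFun {p m : ℕ} (hpm : p ≤ m) (S : Finset (Fin m)) (hS : S.card = p)
    (hSc : Sᶜ.card = m - p) : Fin m → Fin m :=
  fun i => if h : (i : ℕ) < p then S.orderEmbOfFin hS ⟨i, h⟩
    else Sᶜ.orderEmbOfFin hSc ⟨(i : ℕ) - p, by have := i.2; omega⟩

theorem shufFun_inj {p m : ℕ} (hpm : p ≤ m) (S : Finset (Fin m)) (hS : S.card = p)
    (hSc : Sᶜ.card = m - p) : Function.Injective (shufFun hpm S hS hSc) := by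
  intro i j hij
  unfold shufFun at hij
  by_cases hi : (i : ℕ) < p <;> by_cases hj : (j : ℕ) < p
  · simp only [dif_pos hi, dif_pos hj] at hij
    have h2 := (S.orderEmbOfFin hS).injective hij
    rw [Fin.mk.injEq] at h2
    ext; exact h2
  · simp only [dif_pos hi, dif_neg hj] at hij
    exact absurd (hij ▸ S.orderEmbOfFin_mem hS ⟨i, hi⟩)
      (Finset.mem_compl.mp (Sᶜ.orderEmbOfFin_mem hSc _))
  · simp only [dif_neg hi, dif_pos hj] at hij
    exact absurd (hij.symm ▸ S.orderEmbOfFin_mem hS ⟨j, hj⟩)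
      (Finset.mem_compl.mp (Sᶜ.orderEmbOfFin_mem hSc _))
  · simp only [dif_neg hi, dif_neg hj] at hij
    have h2 := (Sᶜ.orderEmbOfFin hSc).injective hij
    rw [Fin.mk.injEq] at h2
    ext; omega

noncomputable def shufPerm {p m : ℕ} (hpm : p ≤ m) (S : Finset (Fin m)) (hS : S.card = p)
    (hSc : Sᶜ.card = m - p) : Equiv.Perm (Fin m) :=
  Equiv.ofBijective _ ((Finite.injective_iff_bijective).1 (shufFun_inj hpm S hS hSc))

theorem shufPerm_apply {p m : ℕ} (hpm : p ≤ m) (S : Finset (Fin m)) (hS : S.card = p)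
    (hSc : Sᶜ.card = m - p) (i : Fin m) :
    shufPerm hpm S hS hSc i = shufFun hpm S hS hSc i := rfl

theorem shufPerm_mem {p m : ℕ} (hpm : p ≤ m) (S : Finset (Fin m)) (hS : S.card = p)
    (hSc : Sᶜ.card = m - p) : shufPerm hpm S hS hSc ∈ shuffles p m := by
  rw [shuffles, Finset.mem_filter]
  refine ⟨Finset.mem_univ _, ?_, ?_⟩
  · intro i j hij hjp
    have hip : (i : ℕ) < p := lt_trans (by exact_mod_cast hij) hjp
    simp only [shufPerm_apply, shufFun]
    rw [dif_pos hip, dif_pos hjp]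
    exact (S.orderEmbOfFin hS).strictMono (by exact_mod_cast hij)
  · intro i j hij hpi
    have hpj : p ≤ (j : ℕ) := le_trans hpi (le_of_lt (by exact_mod_cast hij))
    simp only [shufPerm_apply, shufFun]
    rw [dif_neg (not_lt.mpr hpi), dif_neg (not_lt.mpr hpj)]
    refine (Sᶜ.orderEmbOfFin hSc).strictMono ?_
    have : (i : ℕ) < j := by exact_mod_cast hij
    exact Fin.mk_lt_mk.mpr (by omega)

theorem shufPerm_eq {p m : ℕ} (hpm : p ≤ m) (σ : Equiv.Perm (Fin m))
    (hσ : σ ∈ shuffles p m) (S : Finset (Fin m))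
    (hSdef : S = (Finset.univ.filter fun i : Fin m => (i : ℕ) < p).image σ)
    (hS : S.card = p) (hSc : Sᶜ.card = m - p) :
    shufPerm hpm S hS hSc = σ := by
  obtain ⟨-, h1, h2⟩ : σ ∈ Finset.univ ∧ _ := by
    simpa [shuffles, Finset.mem_filter] using hσ
  have hfront : (fun x : Fin p => σ (Fin.castLE hpm x)) = ⇑(S.orderEmbOfFin hS) := by
    refine Finset.orderEmbOfFin_unique hS ?_ ?_
    · intro x
      rw [hSdef]
      exact Finset.mem_image.mpr ⟨Fin.castLE hpm x, by simp [x.2], rfl⟩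
    · intro a b hab
      exact h1 _ _ hab b.2
  have hback : (fun x : Fin (m - p) => σ ⟨p + (x : ℕ), Nat.add_lt_of_lt_sub' x.2⟩)
      = ⇑(Sᶜ.orderEmbOfFin hSc) := by
    refine Finset.orderEmbOfFin_unique hSc ?_ ?_
    · intro x
      rw [Finset.mem_compl]
      intro hmem
      rw [hSdef] at hmem
      obtain ⟨i, hi, hix⟩ := Finset.mem_image.mp hmem
      simp only [Finset.mem_filter, Finset.mem_univ, true_and] at hi
      have hval : (i : ℕ) = p + ↑x := congrArg Fin.val (σ.injective hix)
      omega
    · intro a b hab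
      exact h2 _ _ (Fin.mk_lt_mk.mpr (Nat.add_lt_add_left hab p)) (Nat.le_add_right p a)
  apply Equiv.ext
  intro i
  rw [shufPerm_apply]
  simp only [shufFun]
  by_cases h : (i : ℕ) < p
  · rw [dif_pos h, ← congrFun hfront ⟨i, h⟩]
    exact congrArg σ (by ext; simp)
  · rw [dif_neg h, ← congrFun hback ⟨(i : ℕ) - p, by have := i.2; omega⟩]
    exact congrArg σ (by ext; exact Nat.add_sub_cancel' (not_lt.mp h))

theorem card_shuffles (p m : ℕ) (hpm : p ≤ m) :
    (shuffles p m).card = m.choose p := by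
  have hcompl : ∀ S : Finset (Fin m), S.card = p → Sᶜ.card = m - p := by
    intro S hS; rw [Finset.card_compl, hS, Fintype.card_fin]
  rw [show m.choose p = (Finset.powersetCard p (Finset.univ : Finset (Fin m))).card by
    rw [Finset.card_powersetCard, Finset.card_univ, Fintype.card_fin]]
  refine Finset.card_bij'
    (fun σ _ => (Finset.univ.filter fun i : Fin m => (i : ℕ) < p).image σ)
    (fun S hS => shufPerm hpm S
      ((Finset.mem_powersetCard.mp hS).2)
      (hcompl S (Finset.mem_powersetCard.mp hS).2)) ?_ ?_ ?_ ?_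
  · intro σ _
    rw [Finset.mem_powersetCard]
    exact ⟨Finset.subset_univ _,
      by rw [Finset.card_image_of_injective _ σ.injective, card_filter_lt' p m hpm]⟩
  · intro S hS; exact shufPerm_mem hpm S _ _
  · intro σ hσ
    exact shufPerm_eq hpm σ hσ _ rfl _ _
  · intro S hS
    obtain ⟨-, hcard⟩ := Finset.mem_powersetCard.mp hS
    refine Finset.eq_of_subset_of_card_le ?_ ?_
    · intro x hx
      obtain ⟨i, hi, rfl⟩ := Finset.mem_image.mp hx
      simp only [Finset.mem_filter, Finset.mem_univ, true_and] at hi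
      rw [shufPerm_apply]
      simp only [shufFun]
      rw [dif_pos hi]
      exact S.orderEmbOfFin_mem _ _
    · rw [Finset.card_image_of_injective _ (shufPerm hpm S _ _).injective,
        card_filter_lt' p m hpm]
      exact hcard.le

end ShuffleCount

section BianchiAux

variable {k : Type} [Field k] [CharZero k] {L : Type} [AddCommGroup L] [Module k L]

theorem koszulSign_zeroDeg {m : ℕ} (σ : Equiv.Perm (Fin m)) :
    koszulSign k σ (fun _ : Fin m => (0 : ℤ)) = 1 := by
  unfold koszulSign
  exact Finset.prod_eq_one fun q _ => by simp

theorem koszulSign_consOne {j : ℕ} (σ : Equiv.Perm (Fin (j + 1))) :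
    koszulSign k σ (Fin.cons 1 fun _ : Fin j => (0 : ℤ)) = 1 := by
  unfold koszulSign
  refine Finset.prod_eq_one fun q hq => ?_
  obtain ⟨-, hlt, -⟩ := Finset.mem_filter.mp hq
  have h0 : q.2 ≠ 0 := by
    intro h
    rw [h] at hlt
    exact absurd hlt (Fin.not_lt_zero _)
  obtain ⟨i, hi⟩ := Fin.eq_succ_of_ne_zero h0
  rw [hi, Fin.cons_succ]
  simp

/-- The linear map `x ↦ {α, …, α, x}` with `j` copies of `α`. -/
noncomputable def snocMap (A : FSLie k L) (α : L) (j : ℕ) : L →ₗ[k] L where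
  toFun x := A.br (j + 1) (Fin.snoc (fun _ : Fin j => α) x)
  map_add' x y := by
    have h : ∀ z : L, (Fin.snoc (fun _ : Fin j => α) z : Fin (j + 1) → L)
        = Function.update (Fin.snoc (fun _ : Fin j => α) (0 : L) : Fin (j + 1) → L)
            (Fin.last j) z :=
      fun z => by rw [Fin.update_snoc_last]
    rw [h (x + y), h x, h y]
    exact (A.br (j + 1)).map_update_add _ _ x y
  map_smul' t x := by
    have h : ∀ z : L, (Fin.snoc (fun _ : Fin j => α) z : Fin (j + 1) → L)
        = Function.update (Fin.snoc (fun _ : Fin j => α) (0 : L) : Fin (j + 1) → L)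
            (Fin.last j) z :=
      fun z => by rw [Fin.update_snoc_last]
    dsimp only [RingHom.id_apply]
    rw [h (t • x), h x]
    exact (A.br (j + 1)).map_update_smul _ _ t x

theorem snocMap_apply (A : FSLie k L) (α : L) (j : ℕ) (x : L) :
    snocMap A α j x = A.br (j + 1) (Fin.snoc (fun _ : Fin j => α) x) := rfl

theorem snocMap_filt (A : FSLie k L) (α : L) (j w : ℕ) (x : L) (hx : x ∈ A.filt w) :
    snocMap A α j x ∈ A.filt (j + w) := by
  rw [snocMap_apply]
  cases j with
  | zero =>
    have h1 : Fin.snoc (fun _ : Fin 0 => α) x = ![x] := by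
      funext i
      refine Fin.lastCases ?_ (fun i => i.elim0) i
      rw [Fin.snoc_last]
      rfl
    rw [h1, Nat.zero_add]
    exact A.filt_diff w x hx
  | succ j =>
    have hw : ∀ i : Fin (j + 2), (Fin.snoc (fun _ : Fin (j + 1) => α) x : Fin (j + 2) → L) i
        ∈ A.filt ((Fin.snoc (fun _ : Fin (j + 1) => 1) w : Fin (j + 2) → ℕ) i) := by
      intro i
      refine Fin.lastCases ?_ ?_ i
      · rw [Fin.snoc_last, Fin.snoc_last]; exact hx
      · intro i
        rw [Fin.snoc_castSucc, Fin.snoc_castSucc, A.filt_one]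
        exact Submodule.mem_top
    have hsum : (∑ i, (Fin.snoc (fun _ : Fin (j + 1) => 1) w : Fin (j + 2) → ℕ) i)
        = (j + 1) + w := by
      rw [Fin.sum_univ_castSucc]
      simp [Fin.snoc_castSucc, Fin.snoc_last]
    have := A.filt_br (j + 2) (Fin.snoc (fun _ : Fin (j + 1) => α) x)
      (Fin.snoc (fun _ : Fin (j + 1) => 1) w) (by omega) hw
    rwa [hsum] at this
  
theorem br_const_gr (A : FSLie k L) {α : L} (hα : α ∈ A.gr 0) (p : ℕ) :
    A.br p (fun _ : Fin p => α) ∈ A.gr 1 := by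
  have := A.br_degree p (fun _ => α) (fun _ => 0) (fun _ => hα)
  simpa using this

theorem curvSeries_filt (A : FSLie k L) {α : L} (p : ℕ) :
    curvSeries k A α p ∈ A.filt p := by
  unfold curvSeries
  by_cases hp : p = 0
  · rw [if_pos hp]; exact Submodule.zero_mem _
  · rw [if_neg hp]
    refine Submodule.smul_mem _ _ ?_
    match p, hp with
    | 1, _ =>
      have h1 : (fun _ : Fin 1 => α) = ![α] := by
        funext i
        fin_cases i
        rfl
      rw [h1]
      exact A.filt_diff 1 α (by rw [A.filt_one]; exact Submodule.mem_top)
    | (q + 2), _ =>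
      have := A.filt_br (q + 2) (fun _ => α) (fun _ => 1) (by omega)
        (fun i => by rw [A.filt_one]; exact Submodule.mem_top)
      simpa using this

theorem br_snoc_eq_cons (A : FSLie k L) {α : L} (hα : α ∈ A.gr 0) (j : ℕ) (x : L)
    (hx : x ∈ A.gr 1) :
    A.br (j + 1) (Fin.snoc (fun _ : Fin j => α) x)
      = A.br (j + 1) (Fin.cons x (fun _ : Fin j => α)) := by
  have hcomp : (Fin.snoc (fun _ : Fin j => α) x : Fin (j + 1) → L)
      = (Fin.cons x (fun _ : Fin j => α) : Fin (j + 1) → L) ∘ (finRotate (j + 1)) := by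
    funext i
    refine Fin.lastCases ?_ ?_ i
    · rw [Fin.snoc_last, Function.comp_apply, finRotate_last, Fin.cons_zero]
    · intro i
      rw [Fin.snoc_castSucc, Function.comp_apply, finRotate_succ_apply,
        Fin.coeSucc_eq_succ, Fin.cons_succ]
  have hmem : ∀ i : Fin (j + 1), (Fin.cons x (fun _ : Fin j => α) : Fin (j + 1) → L) i
      ∈ A.gr ((Fin.cons 1 fun _ : Fin j => (0 : ℤ) : Fin (j + 1) → ℤ) i) := by
    intro i
    refine Fin.cases ?_ ?_ i
    · rw [Fin.cons_zero, Fin.cons_zero]; exact hx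
    · intro i; rw [Fin.cons_succ, Fin.cons_succ]; exact hα
  rw [hcomp, A.br_symm (j + 1) (finRotate (j + 1)) _ _ hmem, koszulSign_consOne, one_smul]

theorem jacobi_const (A : FSLie k L) {α : L} (hα : α ∈ A.gr 0) (m : ℕ) :
    ∑ p ∈ (Finset.Icc 1 m).attach,
      (m.choose p.1) • A.br (m - p.1 + 1)
        (Fin.cons (A.br p.1 fun _ => α) fun _ : Fin (m - p.1) => α) = 0 := by
  have hj := A.jacobi m (fun _ => α) (fun _ => 0) (fun _ => hα)
  rw [← hj]
  refine Finset.sum_congr rfl ?_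
  intro p _
  have hterm : ∀ σ ∈ shuffles p.1 m,
      shTerm k A.br A.br (fun _ => α) (fun _ => (0 : ℤ)) p.1
        (Finset.mem_Icc.mp p.2).2 σ
        = A.br (m - p.1 + 1) (Fin.cons (A.br p.1 fun _ => α) fun _ : Fin (m - p.1) => α) := by
    intro σ _
    unfold shTerm frontV backV
    rw [koszulSign_zeroDeg, one_smul]
  rw [Finset.sum_congr rfl hterm, Finset.sum_const,
    card_shuffles p.1 m (Finset.mem_Icc.mp p.2).2]

theorem jacobi_const' (A : FSLie k L) {α : L} (hα : α ∈ A.gr 0) (m : ℕ) :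
    ∑ p ∈ Finset.Icc 1 m,
      (((p.factorial : k)⁻¹ * (((m - p).factorial : k))⁻¹) •
        A.br (m - p + 1) (Fin.cons (A.br p fun _ => α) fun _ : Fin (m - p) => α)) = 0 := by
  have h0 := jacobi_const A hα m
  rw [Finset.sum_attach (Finset.Icc 1 m) (fun p => (m.choose p) • A.br (m - p + 1)
    (Fin.cons (A.br p fun _ => α) fun _ : Fin (m - p) => α))] at h0
  have key : ∀ p ∈ Finset.Icc 1 m,
      (((p.factorial : k)⁻¹ * (((m - p).factorial : k))⁻¹) •
        A.br (m - p + 1) (Fin.cons (A.br p fun _ => α) fun _ : Fin (m - p) => α))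
      = (m.factorial : k)⁻¹ • ((m.choose p) • A.br (m - p + 1)
        (Fin.cons (A.br p fun _ => α) fun _ : Fin (m - p) => α)) := by
    intro p hp
    obtain ⟨-, hpm⟩ := Finset.mem_Icc.mp hp
    rw [← Nat.cast_smul_eq_nsmul k, smul_smul]
    congr 1
    have hfac : ((m.choose p : k)) * (p.factorial : k) * ((m - p).factorial : k)
        = (m.factorial : k) := by
      exact_mod_cast congrArg (Nat.cast : ℕ → k)
        (Nat.choose_mul_factorial_mul_factorial hpm)
    have h1 : ((p.factorial : k)) ≠ 0 := Nat.cast_ne_zero.mpr p.factorial_ne_zero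
    have h2 : (((m - p).factorial : k)) ≠ 0 := Nat.cast_ne_zero.mpr (m - p).factorial_ne_zero
    have h3 : ((m.factorial : k)) ≠ 0 := Nat.cast_ne_zero.mpr m.factorial_ne_zero
    field_simp
    linear_combination -hfac
  rw [Finset.sum_congr rfl key, ← Finset.smul_sum, h0, smul_zero]

/-- Terms of the doubly-indexed series `(1/j!) {α,…,α, curvSeries p}`. -/
noncomputable def ESeries (A : FSLie k L) (α : L) (j p : ℕ) : L :=
  ((j.factorial : k)⁻¹) • snocMap A α j (curvSeries k A α p)

theorem ESeries_zero (A : FSLie k L) (α : L) (j : ℕ) : ESeries A α j 0 = 0 := by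
  unfold ESeries curvSeries
  simp

theorem ESeries_filt (A : FSLie k L) (α : L) (j p : ℕ) :
    ESeries A α j p ∈ A.filt (j + p) :=
  Submodule.smul_mem _ _ (snocMap_filt A α j p _ (curvSeries_filt A p))

theorem ESeries_antidiagonal (A : FSLie k L) {α : L} (hα : α ∈ A.gr 0) (m : ℕ) :
    ∑ q ∈ Finset.HasAntidiagonal.antidiagonal m, ESeries A α q.1 q.2 = 0 := by
  rw [Finset.Nat.sum_antidiagonal_eq_sum_range_succ_mk, Finset.sum_range_succ,
    Nat.sub_self, ESeries_zero, add_zero]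
  have hbij : (∑ i ∈ Finset.range m, ESeries A α i (m - i))
      = ∑ p ∈ Finset.Icc 1 m, ESeries A α (m - p) p := by
    refine Finset.sum_bij' (fun i _ => m - i) (fun p _ => m - p) ?_ ?_ ?_ ?_ ?_
    · intro i hi
      rw [Finset.mem_range] at hi
      rw [Finset.mem_Icc]
      omega
    · intro p hp
      rw [Finset.mem_Icc] at hp
      rw [Finset.mem_range]
      omega
    · intro i hi
      rw [Finset.mem_range] at hi
      omega
    · intro p hp
      rw [Finset.mem_Icc] at hp
      omega
    · intro i hi
      rw [Finset.mem_range] at hi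
      congr 1
      omega
  rw [hbij, ← jacobi_const' A hα m]
  refine Finset.sum_congr rfl ?_
  intro p hp
  obtain ⟨hp1, hpm⟩ := Finset.mem_Icc.mp hp
  unfold ESeries curvSeries
  rw [if_neg (by omega), map_smul, snocMap_apply,
    br_snoc_eq_cons A hα (m - p) _ (br_const_gr A hα p), smul_smul, mul_comm]

theorem bianchi_aux (A : FSLie k L) {α : L} (hα : α ∈ A.gr 0)
    (c : L) (hc : HasFSumF k A.filt (curvSeries k A α) c) (n : ℕ) :
    (∑ j ∈ Finset.range n, twDiffSeries k A α c j) ∈ A.filt n := by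
  obtain ⟨N, hN⟩ := hc n
  set P := max N n with hP
  have hcP : c - ∑ p ∈ Finset.range P, curvSeries k A α p ∈ A.filt n :=
    hN P (le_max_left _ _)
  have hnP : n ≤ P := le_max_right _ _
  set s : L := ∑ p ∈ Finset.range P, curvSeries k A α p with hs
  -- difference between the twisted-series terms at c and at the partial sum s
  have hdiff : ∀ j : ℕ, twDiffSeries k A α c j
      - ((j.factorial : k)⁻¹) • snocMap A α j s ∈ A.filt n := by
    intro j
    have h1 : twDiffSeries k A α c j = ((j.factorial : k)⁻¹) • snocMap A α j c := rfl
    rw [h1, ← smul_sub, ← map_sub]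
    refine Submodule.smul_mem _ _ ?_
    exact A.filt_antitone (Nat.le_add_left n j) (snocMap_filt A α j n _ hcP)
  have hsum2 : (∑ j ∈ Finset.range n, ((j.factorial : k)⁻¹) • snocMap A α j s)
      ∈ A.filt n := by
    have hrw : ∀ j : ℕ, ((j.factorial : k)⁻¹) • snocMap A α j s
        = ∑ p ∈ Finset.range P, ESeries A α j p := by
      intro j
      rw [hs, map_sum, Finset.smul_sum]
      rfl
    rw [Finset.sum_congr rfl fun j _ => hrw j, ← Finset.sum_product']
    rw [← Finset.sum_filter_add_sum_filter_not (Finset.range n ×ˢ Finset.range P)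
      (fun q => q.1 + q.2 < n)]
    refine Submodule.add_mem _ ?_ ?_
    · have hset : (Finset.range n ×ˢ Finset.range P).filter (fun q => q.1 + q.2 < n)
          = (Finset.range n).biUnion (fun m => Finset.HasAntidiagonal.antidiagonal m) := by
        ext q
        simp only [Finset.mem_filter, Finset.mem_product, Finset.mem_range,
          Finset.mem_biUnion, Finset.HasAntidiagonal.mem_antidiagonal]
        constructor
        · rintro ⟨⟨-, -⟩, h3⟩
          exact ⟨q.1 + q.2, h3, rfl⟩
        · rintro ⟨m', hm', rfl⟩
          omega
      have hdisj : (↑(Finset.range n) : Set ℕ).PairwiseDisjoint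
          (fun m => Finset.HasAntidiagonal.antidiagonal m) := by
        intro a _ b _ hab
        simp only [Function.onFun]
        rw [Finset.disjoint_left]
        intro q hqa hqb
        rw [Finset.HasAntidiagonal.mem_antidiagonal] at hqa hqb
        exact hab (by omega)
      rw [hset, Finset.sum_biUnion hdisj,
        Finset.sum_congr rfl fun m _ => ESeries_antidiagonal A hα m]
      simp
    · refine Submodule.sum_mem _ ?_
      intro q hq
      obtain ⟨-, hge⟩ := Finset.mem_filter.mp hq
      rw [not_lt] at hge
      exact A.filt_antitone hge (ESeries_filt A α q.1 q.2)
  have hfin : (∑ j ∈ Finset.range n, twDiffSeries k A α c j)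
      - (∑ j ∈ Finset.range n, ((j.factorial : k)⁻¹) • snocMap A α j s)
      ∈ A.filt n := by
    rw [← Finset.sum_sub_distrib]
    exact Submodule.sum_mem _ fun j _ => hdiff j
  have := Submodule.add_mem _ hfin hsum2
  rwa [sub_add_cancel] at this

end BianchiAux

/-! ## STATEMENT 1 (Bianchi identity)
For any degree-`0` element `α` of a filtered shifted `L∞`-algebra `L`:
`∂(curv α) + ∑_{j ≥ 1} (1/j!) {α,…,α, curv α} = 0`.  (The left-hand side is
exactly the sum of the series `twDiffSeries A α (curv α)`, whose `j = 0` term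
is `∂(curv α)`.) -/
theorem bianchi_identity
    (k : Type) [Field k] [CharZero k] (L : Type) [AddCommGroup L] [Module k L]
    (A : FSLie k L) (α : L) (hα : α ∈ A.gr 0)
    (c : L) (hc : HasFSumF k A.filt (curvSeries k A α) c) :
    HasFSumF k A.filt (twDiffSeries k A α c) 0 := by
  intro n
  refine ⟨n, fun M hM => ?_⟩
  rw [zero_sub]
  refine Submodule.neg_mem _ ?_
  rw [← Finset.sum_range_add_sum_Ico (fun j => twDiffSeries k A α c j) hM]
  refine Submodule.add_mem _ (bianchi_aux A hα c hc n) ?_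
  refine Submodule.sum_mem _ ?_
  intro j hj
  obtain ⟨hnj, -⟩ := Finset.mem_Ico.mp hj
  have h1 : twDiffSeries k A α c j = ((j.factorial : k)⁻¹) • snocMap A α j c := rfl
  have h2 : c ∈ A.filt 1 := by rw [A.filt_one]; exact Submodule.mem_top
  have h3 : snocMap A α j c ∈ A.filt (j + 1) := snocMap_filt A α j 1 c h2
  rw [h1]
  exact A.filt_antitone (by omega) (Submodule.smul_mem _ _ h3)
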